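/- arXiv:1808.10538 — 4 statements merged into one kernel-verified Lean document; each statement's English description precedes it below -/
import Mathlib

section
/- For a matrix Laurent series h(t) ∈ M_n(ℚ((t))), the following are equivalent: (a) h(t) = q(t)^{-1} p(t) for some matrix polynomials p, q ∈ M_n(ℚ[t]) with q Laurent invertible; (b) h(t) = r(t) s(t)^{-1} for some matrix polynomials r, s with s Laurent invertible; (c) every entry of h(t) lies in the field of rational functions ℚ(t). -/
/-!
Entries of `(q.map φ)⁻¹ * p.map φ` are rational because inverting a matrix commutes with the
field embedding `φ : ℚ(t) → ℚ((t))` (adjugate formula). Conversely, a matrix with rational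
entries becomes polynomial after multiplication by a common denominator `b ≠ 0`, so
`h = (b • 1)⁻¹ * p = p * (b • 1)⁻¹`.
-/

noncomputable def polyToLS : Polynomial ℚ →+* LaurentSeries ℚ :=
  (HahnSeries.ofPowerSeries ℤ ℚ).comp Polynomial.coeToPowerSeries.ringHom

open scoped RatFunc LaurentSeries Polynomial

theorem Matrix.forall_mem_range_iff_exists_map_eq {m n α β : Type*} (f : α → β)
    (h : Matrix m n β) : (∀ i j, h i j ∈ Set.range f) ↔ ∃ H : Matrix m n α, H.map f = h := by
  refine ⟨fun hh => ?_, by rintro ⟨H, rfl⟩ i j; exact ⟨H i j, rfl⟩⟩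
  choose H hH using hh
  exact ⟨H, Matrix.ext hH⟩

section Field

variable {n K L : Type*} [Fintype n] [DecidableEq n] [Field K] [Field L]

theorem RingHom.map_matrix_inv (φ : K →+* L) (M : Matrix n n K) : (M.map φ)⁻¹ = M⁻¹.map φ := by
  rw [Matrix.inv_def, Matrix.inv_def, ← φ.mapMatrix_apply, ← φ.map_adjugate, ← φ.map_det,
    Ring.inverse_eq_inv', Ring.inverse_eq_inv', ← map_inv₀]
  ext i j
  simp

theorem Matrix.isUnit_diagonal_const_of_ne_zero {c : L} (hc : c ≠ 0) :
    IsUnit (Matrix.diagonal fun _ : n => c) := by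
  simp [Matrix.isUnit_diagonal, Pi.isUnit_iff, hc]

end Field

section FractionRing

variable {m n A K L : Type*} [CommRing A] [Field K]
  [Algebra A K] [IsFractionRing A K] [Field L] (φ : K →+* L)

theorem Matrix.exists_smul_eq_map_of_forall_mem_range [Finite m] [Finite n] (h : Matrix m n L)
    (hh : ∀ i j, h i j ∈ Set.range φ) :
    ∃ (p : Matrix m n A) (b : A), φ.comp (algebraMap A K) b ≠ 0 ∧
      φ.comp (algebraMap A K) b • h = p.map (φ.comp (algebraMap A K)) := by
  obtain ⟨H, rfl⟩ := (Matrix.forall_mem_range_iff_exists_map_eq φ h).1 hh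
  obtain ⟨b, hb⟩ := IsLocalization.exist_integer_multiples_of_finite (nonZeroDivisors A)
    fun ij : m × n => H ij.1 ij.2
  choose p hp using hb
  refine ⟨fun i j => p (i, j), b, ?_, Matrix.ext fun i j => ?_⟩
  · exact (map_ne_zero φ).2 (IsLocalization.map_units K b).ne_zero
  · change φ (algebraMap A K b) * φ (H i j) = φ (algebraMap A K (p (i, j)))
    rw [← map_mul, ← Algebra.smul_def, hp (i, j)]

end FractionRing

section Square

variable {n A K L : Type*} [Fintype n] [DecidableEq n] [CommRing A] [Field K]
  [Algebra A K] [IsFractionRing A K] [Field L] (φ : K →+* L)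

open Matrix

theorem exists_eq_inv_mul_map_iff_forall_mem_range (h : Matrix n n L) :
    (∃ p q : Matrix n n A, IsUnit (q.map (φ.comp (algebraMap A K))) ∧
      h = (q.map (φ.comp (algebraMap A K)))⁻¹ * p.map (φ.comp (algebraMap A K))) ↔
    ∀ i j, h i j ∈ Set.range φ := by
  constructor
  · rintro ⟨p, q, -, rfl⟩
    refine (forall_mem_range_iff_exists_map_eq φ _).2
      ⟨(q.map (algebraMap A K))⁻¹ * p.map (algebraMap A K), ?_⟩
    rw [Matrix.map_mul, ← φ.map_matrix_inv, Matrix.map_map, Matrix.map_map]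
    rfl
  · intro hh
    obtain ⟨p, b, hb, hbh⟩ := exists_smul_eq_map_of_forall_mem_range (A := A) φ h hh
    have hq : (diagonal fun _ : n => b).map (φ.comp (algebraMap A K)) =
        diagonal fun _ => φ.comp (algebraMap A K) b := diagonal_map (map_zero _)
    have hunit := isUnit_diagonal_const_of_ne_zero (n := n) hb
    refine ⟨p, diagonal fun _ => b, hq ▸ hunit, ?_⟩
    rw [hq, ← hbh, smul_eq_diagonal_mul,
      nonsing_inv_mul_cancel_left _ _ ((isUnit_iff_isUnit_det _).1 hunit)]

theorem exists_eq_map_mul_inv_iff_forall_mem_range (h : Matrix n n L) :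
    (∃ r s : Matrix n n A, IsUnit (s.map (φ.comp (algebraMap A K))) ∧
      h = r.map (φ.comp (algebraMap A K)) * (s.map (φ.comp (algebraMap A K)))⁻¹) ↔
    ∀ i j, h i j ∈ Set.range φ := by
  constructor
  · rintro ⟨r, s, -, rfl⟩
    refine (forall_mem_range_iff_exists_map_eq φ _).2
      ⟨r.map (algebraMap A K) * (s.map (algebraMap A K))⁻¹, ?_⟩
    rw [Matrix.map_mul, ← φ.map_matrix_inv, Matrix.map_map, Matrix.map_map]
    rfl
  · intro hh
    obtain ⟨r, b, hb, hbh⟩ := exists_smul_eq_map_of_forall_mem_range (A := A) φ h hh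
    have hs : (diagonal fun _ : n => b).map (φ.comp (algebraMap A K)) =
        diagonal fun _ => φ.comp (algebraMap A K) b := diagonal_map (map_zero _)
    have hunit := isUnit_diagonal_const_of_ne_zero (n := n) hb
    refine ⟨r, diagonal fun _ => b, hs ▸ hunit, ?_⟩
    rw [hs, ← hbh, smul_eq_mul_diagonal,
      mul_nonsing_inv_cancel_right _ _ ((isUnit_iff_isUnit_det _).1 hunit)]

end Square

theorem polyToLS_eq_comp :
    polyToLS = (algebraMap (RatFunc ℚ) ℚ⸨X⸩).comp (algebraMap ℚ[X] (RatFunc ℚ)) :=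
  RingHom.ext RatFunc.coe_coe

/-- For a matrix Laurent series `h(t) ∈ M_n(ℚ((t)))`, the following are equivalent:
(a) `h = q⁻¹ p` for matrix polynomials `p, q` with `q` Laurent invertible;
(b) `h = r s⁻¹` for matrix polynomials `r, s` with `s` Laurent invertible;
(c) every entry of `h` lies in the field of rational functions `ℚ(t)`. -/
theorem matrix_laurent_series_rational_tfae (n : ℕ)
    (h : Matrix (Fin n) (Fin n) (LaurentSeries ℚ)) :
    ((∃ p q : Matrix (Fin n) (Fin n) (Polynomial ℚ),
        IsUnit (q.map ⇑polyToLS) ∧ h = (q.map ⇑polyToLS)⁻¹ * p.map ⇑polyToLS) ↔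
      (∀ i j, h i j ∈ Set.range ⇑(@algebraMap (RatFunc ℚ) (LaurentSeries ℚ) _ _ (RatFunc.liftAlgebra ℚ (LaurentSeries ℚ))))) ∧
    ((∃ r s : Matrix (Fin n) (Fin n) (Polynomial ℚ),
        IsUnit (s.map ⇑polyToLS) ∧ h = r.map ⇑polyToLS * (s.map ⇑polyToLS)⁻¹) ↔
      (∀ i j, h i j ∈ Set.range ⇑(@algebraMap (RatFunc ℚ) (LaurentSeries ℚ) _ _ (RatFunc.liftAlgebra ℚ (LaurentSeries ℚ))))) := by
  rw [polyToLS_eq_comp]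
  exact ⟨exists_eq_inv_mul_map_iff_forall_mem_range _ h,
    exists_eq_map_mul_inv_iff_forall_mem_range _ h⟩
end

section
/- Let h(t) = p(t)/q(t) be a nonzero rational function with p(t) ∈ ℤ[t, t^{-1}], q(t) ∈ ℤ[t], q(0) = ±1, and p, q relatively prime, and suppose the Laurent series expansion of h(t) at 0 has nonnegative coefficients a_n. If h(t) has subexponential growth, i.e. limsup_{n→∞} a_n^{1/n} ≤ 1, then every root of q(t) in ℂ is a root of unity. -/
/-- The power series expansion at `t = 0` of `f(t)/q(t)` over `ℚ`, for `f, q ∈ ℤ[t]`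
(meaningful when `q(0) = ±1`, so that `q` is a unit in `ℚ[[t]]`).  The Laurent series
expansion of `h(t) = f(t)/(t^m q(t))` then has coefficients `a_n = coeff (n + m)` of this
series, for `n ≥ -m`. -/
noncomputable def seriesOf (f q : Polynomial ℤ) : PowerSeries ℚ :=
  Polynomial.coeToPowerSeries.ringHom (f.map (Int.castRingHom ℚ)) *
    (Polynomial.coeToPowerSeries.ringHom (q.map (Int.castRingHom ℚ)))⁻¹

/-!
Write `a n ≥ 0` for the coefficients of `f / q`, so that `∑ q_i a_j = f_n` over `i + j = n`.
Since `|q 0| = 1` this recurrence bounds `a n` exponentially, and then the limsup hypothesis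
gives `a n ≤ c ^ n` eventually for every `c > 1`. Hence `∑ a n z ^ n` converges absolutely for
`|z| < 1`, where `q(z) · ∑ a n z ^ n = f(z)`; as `f` and `q` have no common root, `q` has no root
in the open unit disk. Since `|q 0| = |lc q| · ∏ |roots|`, the Mahler measure of `q` is then
`|q 0| = 1`, and by Kronecker's theorem all roots of `q` are roots of unity.
-/

open Filter Finset Polynomial

theorem le_mul_one_add_pow_of_le_add_mul_sum {u : ℕ → ℝ} {C M : ℝ} (hM : 0 ≤ M)
    (h : ∀ n, u n ≤ C + M * ∑ k ∈ range n, u k) (n : ℕ) : u n ≤ C * (1 + M) ^ n := by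
  induction n using Nat.strong_induction_on with
  | _ n ih =>
    calc u n ≤ C + M * ∑ k ∈ range n, u k := h n
      _ ≤ C + M * ∑ k ∈ range n, C * (1 + M) ^ k := by
        gcongr with k hk
        exact ih k (mem_range.1 hk)
      _ = C * (1 + M) ^ n := by
        have hgeom := geom_sum_mul (1 + M) n
        rw [add_sub_cancel_left] at hgeom
        rw [← mul_sum, mul_left_comm, mul_comm M, hgeom]
        ring

theorem abs_le_mul_one_add_pow_of_sum_antidiagonal_eq {a b c : ℕ → ℝ} {C M : ℝ}
    (hb₀ : |b 0| = 1) (hM : 0 ≤ M) (hb : ∀ i, |b i| ≤ M) (hc : ∀ n, |c n| ≤ C)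
    (h : ∀ n, ∑ p ∈ antidiagonal n, b p.1 * a p.2 = c n) (n : ℕ) :
    |a n| ≤ C * (1 + M) ^ n := by
  refine le_mul_one_add_pow_of_le_add_mul_sum (u := fun n => |a n|) hM (fun n => ?_) n
  cases n with
  | zero =>
    have h0 := h 0
    rw [Nat.antidiagonal_zero, sum_singleton] at h0
    simpa [← h0, abs_mul, hb₀] using hc 0
  | succ k =>
    have hk := h (k + 1)
    rw [Nat.sum_antidiagonal_succ] at hk
    have htail :
        |∑ p ∈ antidiagonal k, b (p.1 + 1) * a p.2| ≤ M * ∑ j ∈ range (k + 1), |a j| :=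
      calc |∑ p ∈ antidiagonal k, b (p.1 + 1) * a p.2|
          ≤ ∑ p ∈ antidiagonal k, M * |a p.2| := by
            refine (abs_sum_le_sum_abs _ _).trans (sum_le_sum fun p _ => ?_)
            rw [abs_mul]
            exact mul_le_mul_of_nonneg_right (hb _) (abs_nonneg _)
        _ = M * ∑ j ∈ range (k + 1), |a j| := by
            rw [← mul_sum, ← Nat.sum_antidiagonal_swap]
            exact congrArg _ (Nat.sum_antidiagonal_eq_sum_range_succ (fun i _ => |a i|) k)
    calc |a (k + 1)| = |c (k + 1) - ∑ p ∈ antidiagonal k, b (p.1 + 1) * a p.2| := by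
          rw [← hk, add_sub_cancel_right, abs_mul, hb₀, one_mul]
      _ ≤ C + M * ∑ j ∈ range (k + 1), |a j| := (abs_sub _ _).trans (add_le_add (hc _) htail)

section SubexponentialGrowth

variable {a : ℕ → ℝ}

-- In `ℝ` the `limsup` of a sequence that is not bounded above is a junk value, so a bound of
-- this kind is what gives a hypothesis `limsup ≤ 1` its meaning.
theorem isBoundedUnder_rpow_inv_of_le_mul_pow (m : ℕ) (ha : ∀ n, 0 ≤ a n) {C R : ℝ}
    (hR : 0 ≤ R) (h : ∀ n, a n ≤ C * R ^ n) :
    IsBoundedUnder (· ≤ ·) atTop fun n : ℕ => a (n + m) ^ (n : ℝ)⁻¹ := by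
  set K := max 1 (C * R ^ m)
  refine isBoundedUnder_of_eventually_le (a := K * R) ?_
  filter_upwards [eventually_gt_atTop 0] with n hn
  rw [Real.rpow_inv_le_iff_of_pos (ha _) (by positivity) (by positivity), Real.rpow_natCast]
  calc a (n + m) ≤ C * R ^ m * R ^ n := by rw [mul_assoc, ← pow_add, add_comm]; exact h _
    _ ≤ K ^ n * R ^ n := by
      gcongr
      exact (le_max_right _ _).trans (le_self_pow₀ (le_max_left _ _) hn.ne')
    _ = (K * R) ^ n := (mul_pow _ _ _).symm

theorem eventually_le_pow_of_limsup_rpow_inv_le_one (m : ℕ) (ha : ∀ n, 0 ≤ a n)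
    (hbdd : IsBoundedUnder (· ≤ ·) atTop fun n : ℕ => a (n + m) ^ (n : ℝ)⁻¹)
    (hsub : limsup (fun n : ℕ => a (n + m) ^ (n : ℝ)⁻¹) atTop ≤ 1) {c : ℝ} (hc : 1 < c) :
    ∀ᶠ k in atTop, a k ≤ c ^ k := by
  have hshift : ∀ᶠ n in atTop, a (n + m) ≤ c ^ (n + m) := by
    filter_upwards [eventually_lt_of_limsup_lt (hsub.trans_lt hc) hbdd, eventually_gt_atTop 0]
      with n hn hn0
    rw [Real.rpow_inv_lt_iff_of_pos (ha _) (by positivity) (by positivity),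
      Real.rpow_natCast] at hn
    exact hn.le.trans (pow_le_pow_right₀ hc.le (Nat.le_add_right n m))
  filter_upwards [(tendsto_sub_atTop_nat m).eventually hshift, eventually_ge_atTop m] with k hk hkm
  rwa [Nat.sub_add_cancel hkm] at hk

theorem summable_mul_pow_of_eventually_le_pow (ha : ∀ n, 0 ≤ a n)
    (h : ∀ c > 1, ∀ᶠ k in atTop, a k ≤ c ^ k) {r : ℝ} (hr₀ : 0 ≤ r) (hr : r < 1) :
    Summable fun k => a k * r ^ k := by
  set c := 2 / (1 + r)
  have hc : 1 < c := by rw [one_lt_div (by positivity)]; linarith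
  have hcr : c * r < 1 := by rw [div_mul_eq_mul_div, div_lt_one (by positivity)]; linarith
  refine (summable_geometric_of_lt_one (by positivity) hcr).of_norm_bounded_eventually_nat ?_
  filter_upwards [h c hc] with k hk
  rw [Real.norm_of_nonneg (mul_nonneg (ha k) (by positivity)), mul_pow]
  gcongr

end SubexponentialGrowth

namespace Polynomial

theorem eval_eq_tsum {R : Type*} [Semiring R] [TopologicalSpace R] (p : R[X]) (z : R) :
    p.eval z = ∑' n, p.coeff n * z ^ n := by
  rw [eval_eq_sum, sum_def, tsum_eq_sum fun n hn => by rw [notMem_support_iff.1 hn, zero_mul]]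

theorem summable_norm_coeff_mul_pow {R : Type*} [SeminormedRing R] (p : R[X]) (z : R) :
    Summable fun n => ‖p.coeff n * z ^ n‖ :=
  summable_of_ne_finset_zero (s := p.support) fun n hn => by
    rw [notMem_support_iff.1 hn, zero_mul, norm_zero]

theorem eval_mul_tsum_eq_eval_of_sum_antidiagonal_eq {R : Type*} [NormedCommRing R]
    [CompleteSpace R] {p g : R[X]} {a : ℕ → R}
    (h : ∀ n, ∑ x ∈ antidiagonal n, p.coeff x.1 * a x.2 = g.coeff n) {z : R}
    (ha : Summable fun n => ‖a n * z ^ n‖) :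
    p.eval z * ∑' n, a n * z ^ n = g.eval z := by
  rw [eval_eq_tsum p, eval_eq_tsum g,
    tsum_mul_tsum_eq_tsum_sum_antidiagonal_of_summable_norm (summable_norm_coeff_mul_pow p z) ha]
  refine tsum_congr fun n => ?_
  rw [← h n, sum_mul]
  refine sum_congr rfl fun x hx => ?_
  rw [← mem_antidiagonal.1 hx, pow_add]
  ring

theorem one_le_norm_of_isRoot_of_sum_antidiagonal_eq {𝕜 : Type*} [NormedField 𝕜]
    [CompleteSpace 𝕜] {p g : 𝕜[X]} (hpg : IsCoprime p g) {a : ℕ → 𝕜}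
    (h : ∀ n, ∑ x ∈ antidiagonal n, p.coeff x.1 * a x.2 = g.coeff n)
    (ha : ∀ z : 𝕜, ‖z‖ < 1 → Summable fun n => ‖a n * z ^ n‖) {z : 𝕜}
    (hz : p.IsRoot z) : 1 ≤ ‖z‖ := by
  by_contra! hz1
  have hgz : g.eval z = 0 := by
    rw [← eval_mul_tsum_eq_eval_of_sum_antidiagonal_eq h (ha z hz1), hz.eq_zero, zero_mul]
  simpa [hz.eq_zero, hgz] using aeval_ne_zero_of_isCoprime hpg z

theorem mahlerMeasure_eq_norm_coeff_zero {p : ℂ[X]} (h : ∀ z ∈ p.roots, 1 ≤ ‖z‖) :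
    p.mahlerMeasure = ‖p.coeff 0‖ := by
  have hmax : p.roots.map (fun z => max 1 ‖z‖) = p.roots.map (‖·‖) :=
    Multiset.map_congr rfl fun z hz => max_eq_right (h z hz)
  rw [mahlerMeasure_eq_leadingCoeff_mul_prod_roots, hmax,
    (IsAlgClosed.splits p).coeff_zero_eq_leadingCoeff_mul_prod_roots]
  simpa using Or.inl (map_multiset_prod (normHom : ℂ →*₀ ℝ) p.roots).symm

theorem pow_eq_one_of_isRoot_of_one_le_norm_roots {q : ℤ[X]} (hq0 : |q.coeff 0| = 1)
    (h : ∀ z : ℂ, (q.map (Int.castRingHom ℂ)).IsRoot z → 1 ≤ ‖z‖) {z : ℂ}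
    (hz : (q.map (Int.castRingHom ℂ)).IsRoot z) : ∃ n, 0 < n ∧ z ^ n = 1 := by
  have hq : q ≠ 0 := by
    rintro rfl
    simp at hq0
  have hM : (q.map (Int.castRingHom ℂ)).mahlerMeasure = 1 := by
    rw [mahlerMeasure_eq_norm_coeff_zero fun w hw => h w (isRoot_of_mem_roots hw)]
    simp [← Int.cast_abs, hq0]
  refine pow_eq_one_of_mahlerMeasure_eq_one hM ?_ (mem_aroots.2 ⟨hq, ?_⟩)
  · rintro rfl
    rw [IsRoot, eval_map, eval₂_at_zero] at hz
    simp_all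
  · simpa [aeval_def, eval₂_eq_eval_map] using hz

end Polynomial

section SeriesOf

variable (f q : ℤ[X])

theorem sum_antidiagonal_coeff_mul_coeff_seriesOf {K : Type*} [DivisionRing K] [CharZero K]
    (hq0 : q.coeff 0 ≠ 0) (n : ℕ) :
    ∑ x ∈ antidiagonal n,
      (q.coeff x.1 : K) * (PowerSeries.coeff (R := ℚ) x.2 (seriesOf f q) : K) = f.coeff n := by
  have hunit :
      PowerSeries.constantCoeff (coeToPowerSeries.ringHom (q.map (Int.castRingHom ℚ))) ≠ 0 := by
    simpa [← PowerSeries.coeff_zero_eq_constantCoeff_apply] using hq0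
  have hmul : coeToPowerSeries.ringHom (q.map (Int.castRingHom ℚ)) * seriesOf f q =
      coeToPowerSeries.ringHom (f.map (Int.castRingHom ℚ)) := by
    rw [seriesOf, mul_left_comm, PowerSeries.mul_inv_cancel _ hunit, mul_one]
  have hcoeff := congrArg (PowerSeries.coeff n) hmul
  rw [PowerSeries.coeff_mul] at hcoeff
  simp only [coeToPowerSeries.ringHom_apply, coeff_coe, coeff_map, eq_intCast] at hcoeff
  exact_mod_cast congrArg (Rat.cast : ℚ → K) hcoeff

theorem abs_coeff_seriesOf_le (hq0 : |q.coeff 0| = 1) (n : ℕ) :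
    |(PowerSeries.coeff (R := ℚ) n (seriesOf f q) : ℝ)| ≤ f.supNorm * (1 + q.supNorm) ^ n :=
  abs_le_mul_one_add_pow_of_sum_antidiagonal_eq
    (a := fun n => (PowerSeries.coeff (R := ℚ) n (seriesOf f q) : ℝ))
    (b := fun i => (q.coeff i : ℝ))
    (c := fun n => (f.coeff n : ℝ)) (by exact_mod_cast hq0) q.supNorm_nonneg
    (fun i => (Int.norm_eq_abs _).symm.trans_le (q.le_supNorm i))
    (fun n => (Int.norm_eq_abs _).symm.trans_le (f.le_supNorm n))
    (sum_antidiagonal_coeff_mul_coeff_seriesOf f q (by rintro h; simp [h] at hq0)) n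

theorem one_le_norm_of_isRoot_of_seriesOf (hq0 : q.coeff 0 ≠ 0)
    (hcop : IsCoprime (f.map (Int.castRingHom ℚ)) (q.map (Int.castRingHom ℚ)))
    (hnn : ∀ k, 0 ≤ PowerSeries.coeff (R := ℚ) k (seriesOf f q))
    (hgrowth : ∀ c > 1, ∀ᶠ k in atTop,
      (PowerSeries.coeff (R := ℚ) k (seriesOf f q) : ℝ) ≤ c ^ k)
    {z : ℂ} (hz : (q.map (Int.castRingHom ℂ)).IsRoot z) : 1 ≤ ‖z‖ := by
  refine one_le_norm_of_isRoot_of_sum_antidiagonal_eq (g := f.map (Int.castRingHom ℂ))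
    (a := fun n => (PowerSeries.coeff (R := ℚ) n (seriesOf f q) : ℂ))
    ?_ (fun n => ?_) (fun w hw => ?_) hz
  · have hcast : (Rat.castHom ℂ).comp (Int.castRingHom ℚ) = Int.castRingHom ℂ :=
      RingHom.ext_int _ _
    simpa [Polynomial.map_map, hcast] using (hcop.map (mapRingHom (Rat.castHom ℂ))).symm
  · simpa using sum_antidiagonal_coeff_mul_coeff_seriesOf (K := ℂ) f q hq0 n
  · refine (summable_mul_pow_of_eventually_le_pow (fun k => Rat.cast_nonneg.2 (hnn k)) hgrowth
      (norm_nonneg w) hw).congr fun n => ?_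
    simp [abs_of_nonneg (Rat.cast_nonneg.2 (hnn n) : (0 : ℝ) ≤ _)]

end SeriesOf

theorem roots_of_unity_of_subexponential_growth_general (f q : Polynomial ℤ) (m : ℕ)
    (hq0 : q.coeff 0 = 1 ∨ q.coeff 0 = -1)
    (hcop : IsCoprime (f.map (Int.castRingHom ℚ)) (q.map (Int.castRingHom ℚ)))
    (hnn : ∀ k : ℕ, 0 ≤ PowerSeries.coeff (R := ℚ) k (seriesOf f q))
    (hsub : Filter.limsup
        (fun n : ℕ => ((PowerSeries.coeff (R := ℚ) (n + m) (seriesOf f q) : ℚ) : ℝ) ^ ((n : ℝ)⁻¹))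
        Filter.atTop ≤ 1) :
    ∀ z : ℂ, (q.map (Int.castRingHom ℂ)).IsRoot z → ∃ j : ℕ, 0 < j ∧ z ^ j = 1 := by
  have hq0' : |q.coeff 0| = 1 := by rcases hq0 with h | h <;> simp [h]
  have hnn' : ∀ k, (0 : ℝ) ≤ PowerSeries.coeff (R := ℚ) k (seriesOf f q) :=
    fun k => Rat.cast_nonneg.2 (hnn k)
  have hbdd := isBoundedUnder_rpow_inv_of_le_mul_pow m hnn'
    (add_nonneg zero_le_one q.supNorm_nonneg)
    fun n => (le_abs_self _).trans (abs_coeff_seriesOf_le f q hq0' n)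
  have hgrowth : ∀ c > 1, ∀ᶠ k in atTop,
      (PowerSeries.coeff (R := ℚ) k (seriesOf f q) : ℝ) ≤ c ^ k :=
    fun c hc => eventually_le_pow_of_limsup_rpow_inv_le_one m hnn' hbdd hsub hc
  have hq0_ne : q.coeff 0 ≠ 0 := by rintro h; simp [h] at hq0'
  intro z hz
  exact pow_eq_one_of_isRoot_of_one_le_norm_roots hq0'
    (fun w hw => one_le_norm_of_isRoot_of_seriesOf f q hq0_ne hcop hnn hgrowth hw) hz

/-- Let `h(t) = p(t)/q(t)` be a nonzero rational function with `p(t) = f(t)·t^{-m} ∈ ℤ[t,t⁻¹]`,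
`q(t) ∈ ℤ[t]`, `q(0) = ±1`, and `p, q` relatively prime, whose Laurent expansion at `0` has
nonnegative coefficients.  If `h` has subexponential growth, i.e.
`limsup_{n→∞} a_n^{1/n} ≤ 1`, then every complex root of `q(t)` is a root of unity. -/
theorem roots_of_unity_of_subexponential_growth (f q : Polynomial ℤ) (m : ℕ)
    (hf : f ≠ 0)
    (hq0 : q.coeff 0 = 1 ∨ q.coeff 0 = -1)
    (hcop : IsCoprime (f.map (Int.castRingHom ℚ)) (q.map (Int.castRingHom ℚ)))
    (hnn : ∀ k : ℕ, 0 ≤ PowerSeries.coeff (R := ℚ) k (seriesOf f q))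
    (hsub : Filter.limsup
        (fun n : ℕ => ((PowerSeries.coeff (R := ℚ) (n + m) (seriesOf f q) : ℚ) : ℝ) ^ ((n : ℝ)⁻¹))
        Filter.atTop ≤ 1) :
    ∀ z : ℂ, (q.map (Int.castRingHom ℂ)).IsRoot z → ∃ j : ℕ, 0 < j ∧ z ^ j = 1 :=
  roots_of_unity_of_subexponential_growth_general f q m hq0 hcop hnn hsub
end

section
/- Let q(t) ∈ M_n(ℤ[t]) be a matrix polynomial with det q(0) = ±1, let c(t) be its adjugate, and let p(t) ∈ M_n(ℤ[t]). Suppose every entry of the formal power series q(t)^{-1} p(t) ∈ M_n(ℤ[[t]]) has nonnegative coefficients, and suppose p(t) and q(t) have no common roots (λ is a root of a matrix polynomial r(t) if det r(λ) = 0). Then the set of roots of q(t) equals the union over i,j of the sets of poles of the rational functions (q(t)^{-1}p(t))_{ij}. -/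
/-- The canonical ring homomorphism `ℤ[t] → ℚ(t)`. -/
noncomputable def intPolyToRat : Polynomial ℤ →+* RatFunc ℚ :=
  (algebraMap (Polynomial ℚ) (RatFunc ℚ)).comp (Polynomial.mapRingHom (Int.castRingHom ℚ))

/-!
Each entry of `h = q⁻¹ p` is `(adj q · p)ᵢⱼ / det q`, so every pole of `h` is a root of `det q`.
Conversely, let `λ` be a root of `det q` that is a pole of no entry of `h`, and let `d` be the
product of all the denominators. Then `G = d h` is a polynomial matrix with `q G = d p`, and
evaluating determinants at `λ` gives `0 = d(λ)ⁿ det p(λ)` with `d(λ) ≠ 0`: `λ` is a common root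
of `p` and `q`.
-/

open Polynomial

theorem RingHom.map_det_eq_zero_of_mul_eq_smul {R S ι : Type*} [CommRing R] [CommRing S]
    [IsDomain S] [Fintype ι] [DecidableEq ι] (ψ : R →+* S) {Q G P : Matrix ι ι R} {d : R}
    (h : Q * G = d • P) (hQ : ψ Q.det = 0) (hd : ψ d ≠ 0) : ψ P.det = 0 := by
  have hdet := congrArg (fun M => ψ M.det) h
  simp only [Matrix.det_mul, Matrix.det_smul, map_mul, map_pow, hQ, zero_mul] at hdet
  exact (mul_eq_zero.mp hdet.symm).resolve_left (pow_ne_zero _ hd)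

theorem Matrix.det_map_polynomialMap {R S n : Type*} [CommRing R] [CommRing S] [Fintype n]
    [DecidableEq n] (f : R →+* S) (M : Matrix n n R[X]) :
    (M.map (Polynomial.map f)).det = M.det.map f :=
  ((mapRingHom f).map_det M).symm

namespace RatFunc

variable {K : Type*} [Field K]

theorem exists_algebraMap_eq_mul_of_denom_dvd {f : RatFunc K} {d : K[X]} (h : f.denom ∣ d) :
    ∃ g : K[X], algebraMap K[X] (RatFunc K) g = algebraMap K[X] (RatFunc K) d * f := by
  obtain ⟨e, rfl⟩ := h
  refine ⟨f.num * e, ?_⟩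
  have hnum : algebraMap K[X] (RatFunc K) f.num = f * algebraMap K[X] (RatFunc K) f.denom :=
    (div_eq_iff (algebraMap_ne_zero f.denom_ne_zero)).mp (num_div_denom f)
  rw [map_mul, map_mul, hnum]
  ring

theorem exists_map_eq_prod_denom_smul {m n : Type*} [Fintype m] [Fintype n]
    (H : Matrix m n (RatFunc K)) :
    ∃ G : Matrix m n K[X], G.map (algebraMap K[X] (RatFunc K)) =
      algebraMap K[X] (RatFunc K) (∏ i, ∏ j, (H i j).denom) • H := by
  have hdvd (i : m) (j : n) : (H i j).denom ∣ ∏ i, ∏ j, (H i j).denom :=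
    (Finset.dvd_prod_of_mem (fun j => (H i j).denom) (Finset.mem_univ j)).trans
      (Finset.dvd_prod_of_mem (fun i => ∏ j, (H i j).denom) (Finset.mem_univ i))
  choose G hG using fun i j => exists_algebraMap_eq_mul_of_denom_dvd (hdvd i j)
  exact ⟨Matrix.of G, Matrix.ext hG⟩

variable {n : Type*} [Fintype n] [DecidableEq n]

theorem denom_inv_mul_dvd_det {Q : Matrix n n K[X]} (hQ : Q.det ≠ 0) (P : Matrix n n K[X])
    (i j : n) :
    (((Q.map (algebraMap K[X] (RatFunc K)))⁻¹ * P.map (algebraMap K[X] (RatFunc K))) i j).denom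
      ∣ Q.det := by
  set A := algebraMap K[X] (RatFunc K)
  have hinv : (Q.map A)⁻¹ = (A Q.det)⁻¹ • Q.adjugate.map A := by
    rw [Matrix.inv_def, Ring.inverse_eq_inv', ← RingHom.mapMatrix_apply, ← RingHom.map_det,
      ← RingHom.map_adjugate]
    rfl
  refine (denom_dvd hQ).mpr ⟨(Q.adjugate * P) i j, ?_⟩
  rw [hinv, Matrix.smul_mul, ← Matrix.map_mul, Matrix.smul_apply, Matrix.map_apply, smul_eq_mul,
    inv_mul_eq_div]

variable {L : Type*} [Field L] [Algebra K L]

theorem isRoot_det_of_forall_not_isRoot_denom {Q P : Matrix n n K[X]} (hQ : Q.det ≠ 0) {z : L}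
    (hz : (Q.det.map (algebraMap K L)).IsRoot z)
    (hpoles : ∀ i j, ¬((((Q.map (algebraMap K[X] (RatFunc K)))⁻¹ *
      P.map (algebraMap K[X] (RatFunc K))) i j).denom.map (algebraMap K L)).IsRoot z) :
    (P.det.map (algebraMap K L)).IsRoot z := by
  set A := algebraMap K[X] (RatFunc K)
  set H := (Q.map A)⁻¹ * P.map A
  obtain ⟨G, hG⟩ := exists_map_eq_prod_denom_smul H
  set d := ∏ i, ∏ j, (H i j).denom
  have hQunit : IsUnit (Q.map A).det := by
    rw [← RingHom.mapMatrix_apply, ← RingHom.map_det]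
    exact (algebraMap_ne_zero hQ).isUnit
  have hQH : Q.map A * H = P.map A := (Q.map A).mul_nonsing_inv_cancel_left _ hQunit
  have hQG : Q * G = d • P := by
    refine Matrix.map_injective (algebraMap_injective K) ?_
    show (Q * G).map A = (d • P).map A
    rw [Matrix.map_mul, hG, Matrix.mul_smul, hQH, Matrix.map_smul' _ _ _ (map_mul A)]
  simp only [IsRoot.def, eval_map_algebraMap] at hz hpoles ⊢
  refine (aeval z).toRingHom.map_det_eq_zero_of_mul_eq_smul hQG hz ?_
  simp only [d, AlgHom.toRingHom_eq_coe, RingHom.coe_coe, map_prod]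
  exact Finset.prod_ne_zero_iff.mpr fun i _ => Finset.prod_ne_zero_iff.mpr fun j _ => hpoles i j

theorem setOf_isRoot_det_eq_iUnion_setOf_isRoot_denom {Q P : Matrix n n K[X]} (hQ : Q.det ≠ 0)
    (hcoprime : ¬∃ z : L, (Q.det.map (algebraMap K L)).IsRoot z ∧
      (P.det.map (algebraMap K L)).IsRoot z) :
    {z : L | (Q.det.map (algebraMap K L)).IsRoot z} =
      ⋃ (i : n) (j : n), {z : L | ((((Q.map (algebraMap K[X] (RatFunc K)))⁻¹ *
        P.map (algebraMap K[X] (RatFunc K))) i j).denom.map (algebraMap K L)).IsRoot z} := by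
  refine Set.Subset.antisymm (fun z hz => ?_) (Set.iUnion₂_subset fun i j z hz => ?_)
  · by_contra hpoles
    simp only [Set.mem_iUnion, not_exists] at hpoles
    exact hcoprime ⟨z, hz, isRoot_det_of_forall_not_isRoot_denom hQ hz hpoles⟩
  · exact IsRoot.dvd hz (map_dvd (algebraMap K L) (denom_inv_mul_dvd_det hQ P i j))

end RatFunc

theorem roots_eq_union_of_poles_general (n : ℕ)
    (p q : Matrix (Fin n) (Fin n) (Polynomial ℤ))
    (hq0 : q.det.eval 0 = 1 ∨ q.det.eval 0 = -1)
    (hnocommon : ¬∃ z : ℂ, (q.det.map (Int.castRingHom ℂ)).IsRoot z ∧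
      (p.det.map (Int.castRingHom ℂ)).IsRoot z) :
    {z : ℂ | (q.det.map (Int.castRingHom ℂ)).IsRoot z} =
      ⋃ (i : Fin n) (j : Fin n),
        {z : ℂ | (Polynomial.map (algebraMap ℚ ℂ)
          (RatFunc.denom (((q.map ⇑intPolyToRat)⁻¹ * p.map ⇑intPolyToRat) i j))).IsRoot z} := by
  have hmap (r : Matrix (Fin n) (Fin n) ℤ[X]) : r.map intPolyToRat =
      (r.map (map (Int.castRingHom ℚ))).map (algebraMap ℚ[X] (RatFunc ℚ)) :=
    (Matrix.map_map ..).symm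
  have hdet (r : Matrix (Fin n) (Fin n) ℤ[X]) :
      (r.map (map (Int.castRingHom ℚ))).det.map (algebraMap ℚ ℂ) =
        r.det.map (Int.castRingHom ℂ) := by
    rw [Matrix.det_map_polynomialMap, map_map,
      RingHom.ext_int ((algebraMap ℚ ℂ).comp (Int.castRingHom ℚ)) (Int.castRingHom ℂ)]
  have hQ : (q.map (map (Int.castRingHom ℚ))).det ≠ 0 := by
    rw [Matrix.det_map_polynomialMap, Polynomial.map_ne_zero_iff Int.cast_injective]
    intro h
    simp [h] at hq0
  rw [← hdet p, ← hdet q] at hnocommon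
  rw [hmap p, hmap q, ← hdet q]
  exact RatFunc.setOf_isRoot_det_eq_iUnion_setOf_isRoot_denom hQ hnocommon

/-- Let `q(t) ∈ M_n(ℤ[t])` with `det q(0) = ±1` and `p(t) ∈ M_n(ℤ[t])`, and let
`h(t) = q(t)⁻¹ p(t)`, a matrix of rational functions.  Suppose every entry of `h(t)`, as a
formal (Laurent/power) series, has nonnegative coefficients, and that `p` and `q` have no
common root in `ℂ` (where `λ` is a root of a matrix polynomial `r(t)` iff `det r(λ) = 0`).
Then the set of roots of `q(t)` equals the union over `i, j` of the sets of poles of the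
rational functions `h(t)_{ij}` (the roots of the reduced denominator of each entry). -/
theorem roots_eq_union_of_poles (n : ℕ)
    (p q : Matrix (Fin n) (Fin n) (Polynomial ℤ))
    (hq0 : q.det.eval 0 = 1 ∨ q.det.eval 0 = -1)
    (hnn : ∀ i j, ∀ k : ℤ,
      0 ≤ ((((q.map ⇑intPolyToRat)⁻¹ * p.map ⇑intPolyToRat) i j : RatFunc ℚ)
        : LaurentSeries ℚ).coeff k)
    (hnocommon : ¬∃ z : ℂ, (q.det.map (Int.castRingHom ℂ)).IsRoot z ∧
      (p.det.map (Int.castRingHom ℂ)).IsRoot z) :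
    {z : ℂ | (q.det.map (Int.castRingHom ℂ)).IsRoot z} =
      ⋃ (i : Fin n) (j : Fin n),
        {z : ℂ | (Polynomial.map (algebraMap ℚ ℂ)
          (RatFunc.denom (((q.map ⇑intPolyToRat)⁻¹ * p.map ⇑intPolyToRat) i j))).IsRoot z} :=
  roots_eq_union_of_poles_general n p q hq0 hnocommon
end

section
/- Let M be an irreducible nonnegative integer n×n matrix and P a permutation matrix with M = P M^T and such that M, M^T, P pairwise commute. Suppose the matrix polynomial q(t) = I − Mt + Pt² has all roots on the unit circle, where a root is λ with det q(λ) = 0. Then the spectral radius ρ(M) ≤ 2, and each eigenvalue δ of M satisfies |δ| ≤ 2. Conversely, if ρ(M) > 2 then q(t) has a root off the unit circle. -/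
/-!
If `M` and `P` commute they have a common eigenvector `u`, say `M u = δ u` and `P u = ζ u`, and
then `q(z) u = (1 - δ z + ζ z²) u`, so every root `z` of this scalar quadratic is a root of
`det q`. As `P` has finite order, `|ζ| = 1`; a root with `|z| = 1` would give `δ = z⁻¹ + ζ z`,
hence `|δ| ≤ 2`. So an eigenvalue with `|δ| > 2` produces a root of `det q` off the unit circle,
and the bound on the eigenvalues is the contrapositive.
-/

open Matrix Module End

namespace Module.End

variable {K V : Type*} [Field K] [AddCommGroup V] [Module K V]

theorem exists_hasEigenvector_of_commute [IsAlgClosed K] [FiniteDimensional K V]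
    {f g : End K V} (hfg : Commute f g) {μ : K} (hμ : f.HasEigenvalue μ) :
    ∃ ν v, f.HasEigenvector μ v ∧ g.HasEigenvector ν v := by
  have hmaps : Set.MapsTo g (f.eigenspace μ) (f.eigenspace μ) :=
    mapsTo_genEigenspace_of_comm hfg μ 1
  have : Nontrivial (f.eigenspace μ) := Submodule.nontrivial_iff_ne_bot.2 hμ
  obtain ⟨ν, hν⟩ := exists_eigenvalue (g.restrict hmaps)
  obtain ⟨⟨v, hv⟩, hvν⟩ := hν.exists_hasEigenvector
  refine ⟨ν, v, ⟨hv, fun h => hvν.2 (Subtype.ext h)⟩, ?_, fun h => hvν.2 (Subtype.ext h)⟩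
  rw [mem_eigenspace_iff]
  exact congrArg Subtype.val hvν.apply_eq_smul

theorem HasEigenvector.isOfFinOrder {f : End K V} {μ : K} {v : V} (hv : f.HasEigenvector μ v)
    (hf : IsOfFinOrder f) : IsOfFinOrder μ := by
  obtain ⟨k, hk, hfk⟩ := isOfFinOrder_iff_pow_eq_one.1 hf
  refine isOfFinOrder_iff_pow_eq_one.2 ⟨k, hk, smul_left_injective K hv.2 ?_⟩
  simpa [hfk] using (hv.pow_apply k).symm

end Module.End

namespace Matrix

variable {n : Type*} [Fintype n] [DecidableEq n]

theorem hasEigenvalue_toLin'_of_det_sub_smul_eq_zero {K : Type*} [Field K] {A : Matrix n n K}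
    {μ : K} (h : (A - μ • 1).det = 0) : HasEigenvalue (toLin' A) μ := by
  obtain ⟨v, hv0, hv⟩ := exists_mulVec_eq_zero_iff.2 h
  refine hasEigenvalue_of_hasEigenvector ⟨mem_eigenspace_iff.2 ?_, hv0⟩
  simpa [sub_mulVec, sub_eq_zero, smul_mulVec] using hv

theorem isOfFinOrder_permMatrix (R : Type*) [Ring R] (σ : Equiv.Perm n) :
    IsOfFinOrder (σ.permMatrix R) := by
  simpa using (permMatrixHom (R := R)).isOfFinOrder (isOfFinOrder_of_finite σ⁻¹)

end Matrix

theorem Complex.exists_one_sub_mul_add_mul_sq_eq_zero {ζ : ℂ} (hζ : ζ ≠ 0) (δ : ℂ) :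
    ∃ z : ℂ, 1 - δ * z + ζ * z ^ 2 = 0 := by
  obtain ⟨z, hz⟩ :=
    exists_quadratic_eq_zero hζ (IsAlgClosed.exists_eq_mul_self (discrim ζ (-δ) 1))
  exact ⟨z, by linear_combination hz⟩

theorem norm_le_two_of_one_sub_mul_add_mul_sq_eq_zero {𝕜 : Type*} [NormedField 𝕜]
    {δ ζ z : 𝕜} (hζ : ‖ζ‖ = 1) (hz : ‖z‖ = 1) (h : 1 - δ * z + ζ * z ^ 2 = 0) :
    ‖δ‖ ≤ 2 := by
  have hδz : δ * z = 1 + ζ * z ^ 2 := by linear_combination -h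
  calc ‖δ‖ = ‖δ * z‖ := by rw [norm_mul, hz, mul_one]
    _ ≤ ‖(1 : 𝕜)‖ + ‖ζ * z ^ 2‖ := hδz ▸ norm_add_le _ _
    _ ≤ 2 := by simp [norm_mul, norm_pow, hζ, hz]; norm_num

theorem Matrix.exists_det_one_sub_smul_add_sq_smul_eq_zero_of_two_lt_norm {n : Type*}
    [Fintype n] [DecidableEq n] {A Q : Matrix n n ℂ} (hAQ : Commute A Q) (hQ : IsOfFinOrder Q)
    {δ : ℂ} (hδ : (A - δ • 1).det = 0) (h2 : 2 < ‖δ‖) :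
    ∃ z : ℂ, (1 - z • A + z ^ 2 • Q).det = 0 ∧ ‖z‖ ≠ 1 := by
  obtain ⟨ζ, u, hAu, hQu⟩ := exists_hasEigenvector_of_commute (hAQ.map toLinAlgEquiv')
    (hasEigenvalue_toLin'_of_det_sub_smul_eq_zero hδ)
  have hζ : ‖ζ‖ = 1 := (hQu.isOfFinOrder
    ((toLinAlgEquiv' : Matrix n n ℂ ≃ₐ[ℂ] _).toMonoidHom.isOfFinOrder hQ)).norm_eq_one
  obtain ⟨z, hz⟩ :=
    Complex.exists_one_sub_mul_add_mul_sq_eq_zero (norm_ne_zero_iff.1 (hζ ▸ one_ne_zero)) δ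
  refine ⟨z, exists_mulVec_eq_zero_iff.1 ⟨u, hAu.2, ?_⟩,
    fun hz1 => h2.not_ge (norm_le_two_of_one_sub_mul_add_mul_sq_eq_zero hζ hz1 hz)⟩
  have hAu' : A *ᵥ u = δ • u := hAu.apply_eq_smul
  have hQu' : Q *ᵥ u = ζ • u := hQu.apply_eq_smul
  calc (1 - z • A + z ^ 2 • Q) *ᵥ u = (1 - δ * z + ζ * z ^ 2) • u := by
        simp only [add_mulVec, sub_mulVec, one_mulVec, smul_mulVec, hAu', hQu', smul_smul,
          add_smul, sub_smul, one_smul, mul_comm]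
    _ = 0 := by rw [hz, zero_smul]

theorem dim2_roots_on_circle_iff_spectral_radius_general (n : ℕ)
    (M P : Matrix (Fin n) (Fin n) ℤ) (σ : Equiv.Perm (Fin n))
    (hP : P = fun i j => if σ i = j then 1 else 0)
    (hMP : M * P = P * M) :
    ((∀ z : ℂ,
        ((1 : Matrix (Fin n) (Fin n) ℂ) - z • M.map (Int.cast : ℤ → ℂ) +
          z ^ 2 • P.map (Int.cast : ℤ → ℂ)).det = 0 → ‖z‖ = 1) →
      ∀ δ : ℂ, (M.map (Int.cast : ℤ → ℂ) - δ • 1).det = 0 → ‖δ‖ ≤ 2) ∧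
    ((∃ δ : ℂ, (M.map (Int.cast : ℤ → ℂ) - δ • 1).det = 0 ∧ 2 < ‖δ‖) →
      ∃ z : ℂ,
        ((1 : Matrix (Fin n) (Fin n) ℂ) - z • M.map (Int.cast : ℤ → ℂ) +
          z ^ 2 • P.map (Int.cast : ℤ → ℂ)).det = 0 ∧ ‖z‖ ≠ 1) := by
  have hPσ : P.map (Int.cast : ℤ → ℂ) = σ.permMatrix ℂ := by
    ext i j
    rw [map_apply, hP]
    simp [PEquiv.toMatrix_apply, apply_ite (Int.cast : ℤ → ℂ)]
  have hcomm : Commute (M.map (Int.cast : ℤ → ℂ)) (P.map Int.cast) :=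
    Commute.map (show Commute M P from hMP) (Int.castRingHom ℂ).mapMatrix
  have key {δ : ℂ} (hδ : (M.map (Int.cast : ℤ → ℂ) - δ • 1).det = 0) (h2 : 2 < ‖δ‖) :=
    exists_det_one_sub_smul_add_sq_smul_eq_zero_of_two_lt_norm hcomm
      (hPσ ▸ isOfFinOrder_permMatrix ℂ σ) hδ h2
  refine ⟨fun hroots δ hδ => ?_, fun ⟨δ, hδ, h2⟩ => key hδ h2⟩
  by_contra h2
  obtain ⟨z, hz, hz1⟩ := key hδ (not_le.1 h2)
  exact hz1 (hroots z hz)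

/-- Let `M` be an irreducible nonnegative integer matrix and `P` a permutation matrix with
`M = P Mᵀ` and `M`, `Mᵀ`, `P` pairwise commuting.  If the matrix polynomial
`q(t) = I − Mt + Pt²` has all of its roots (the `λ ∈ ℂ` with `det q(λ) = 0`) on the unit
circle, then every eigenvalue `δ` of `M` satisfies `|δ| ≤ 2` (so the spectral radius
`ρ(M) ≤ 2`).  Conversely, if some eigenvalue has `|δ| > 2` (i.e. `ρ(M) > 2`), then `q(t)`
has a root off the unit circle. -/
theorem dim2_roots_on_circle_iff_spectral_radius (n : ℕ)
    (M P : Matrix (Fin n) (Fin n) ℤ) (σ : Equiv.Perm (Fin n))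
    (hP : P = fun i j => if σ i = j then 1 else 0)
    (hnn : ∀ i j, 0 ≤ M i j)
    (hirr : ∀ s : Set (Fin n), s.Nonempty → s ≠ Set.univ → ∃ i ∈ s, ∃ j, j ∉ s ∧ M i j ≠ 0)
    (hMPMt : M = P * M.transpose)
    (hMMt : M * M.transpose = M.transpose * M)
    (hMP : M * P = P * M)
    (hMtP : M.transpose * P = P * M.transpose) :
    ((∀ z : ℂ,
        ((1 : Matrix (Fin n) (Fin n) ℂ) - z • M.map (Int.cast : ℤ → ℂ) +
          z ^ 2 • P.map (Int.cast : ℤ → ℂ)).det = 0 → ‖z‖ = 1) →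
      ∀ δ : ℂ, (M.map (Int.cast : ℤ → ℂ) - δ • 1).det = 0 → ‖δ‖ ≤ 2) ∧
    ((∃ δ : ℂ, (M.map (Int.cast : ℤ → ℂ) - δ • 1).det = 0 ∧ 2 < ‖δ‖) →
      ∃ z : ℂ,
        ((1 : Matrix (Fin n) (Fin n) ℂ) - z • M.map (Int.cast : ℤ → ℂ) +
          z ^ 2 • P.map (Int.cast : ℤ → ℂ)).det = 0 ∧ ‖z‖ ≠ 1) :=
  dim2_roots_on_circle_iff_spectral_radius_general n M P σ hP hMP
end
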